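/- In a regular vine structure, each cluster of any tree is connected to other clusters through at most two distinct separators. -/
import Mathlib

open SimpleGraph Walk

private lemma vine_aux_support_eq {N : Type*} {G : SimpleGraph N} (hac : G.IsAcyclic)
    {a b : N} {p q : G.Walk a b} (hp : p.IsPath) (hq : q.IsPath) :
    p.support = q.support := by
  have h := hac.path_unique ⟨p, hp⟩ ⟨q, hq⟩
  simpa using congrArg (fun r : G.Path a b => r.1.support) h

private lemma vine_aux_snd {N : Type*} {G : SimpleGraph N} :
    ∀ {a b : N} (w : G.Walk a b), w.IsPath → a ≠ b →
      ∃ v, G.Adj a v ∧ v ∈ w.support ∧ v ≠ a := by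
  intro a b w hw hab
  cases w with
  | nil => exact absurd rfl hab
  | cons h q =>
    rw [Walk.cons_isPath_iff] at hw
    refine ⟨_, h, by simp, ?_⟩
    intro hv
    exact hw.2 (hv ▸ q.start_mem_support)

private lemma vine_aux_switch {N : Type*} {G : SimpleGraph N} (P : N → Prop)
    [DecidablePred P] :
    ∀ {a b : N} (w : G.Walk a b), P a → ¬ P b →
      ∃ c d, G.Adj c d ∧ c ∈ w.support ∧ d ∈ w.support ∧ P c ∧ ¬ P d := by
  intro a b w
  induction w with
  | nil => intro h1 h2; exact absurd h1 h2
  | @cons u x b h q ih =>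
    intro ha hb
    by_cases hx : P x
    · obtain ⟨c, d, h1, h2, h3, h4, h5⟩ := ih hx hb
      exact ⟨c, d, h1, by simp [h2], by simp [h3], h4, h5⟩
    · exact ⟨u, x, h, by simp, by simp, ha, hx⟩

/-- In a vine, a `k`-element cluster of a tree cannot connect to three other
clusters through three pairwise distinct `(k-1)`-element separators: assuming
the `(k-1)`-element separators are clusters (labels) of a junction tree
satisfying the running intersection property, such a configuration is
contradictory. -/
theorem stmt_7 {V : Type*} [DecidableEq V] {N : Type*} [Fintype N]
    (k : ℕ) (hk : 2 ≤ k)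
    (G : SimpleGraph N) (hG : G.IsTree)
    (L : N → Finset V)
    (hLcard : ∀ a, (L a).card = k - 1)
    (hRIP : ∀ (a b : N) (p : G.Walk a b), p.IsPath →
      ∀ v : V, v ∈ L a → v ∈ L b → ∀ c ∈ p.support, v ∈ L c)
    (C C1 C2 C3 : Finset V) (hC : C.card = k)
    (S1 S2 S3 : Finset V)
    (hS1 : S1 = C ∩ C1) (hS2 : S2 = C ∩ C2) (hS3 : S3 = C ∩ C3)
    (hS1card : S1.card = k - 1) (hS2card : S2.card = k - 1)
    (hS3card : S3.card = k - 1)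
    (h12 : S1 ≠ S2) (h13 : S1 ≠ S3) (h23 : S2 ≠ S3)
    (hin1 : ∃ a : N, L a = S1) (hin2 : ∃ a : N, L a = S2)
    (hin3 : ∃ a : N, L a = S3) :
    False := by
  classical
  obtain ⟨a1, ha1⟩ := hin1
  obtain ⟨a2, ha2⟩ := hin2
  obtain ⟨a3, ha3⟩ := hin3
  -- each separator is `C` minus one point
  have hxgen : ∀ S : Finset V, S = C ∩ (id : Finset V → Finset V) S →
      True := fun _ _ => trivial
  have hsub1 : S1 ⊆ C := by rw [hS1]; exact Finset.inter_subset_left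
  have hsub2 : S2 ⊆ C := by rw [hS2]; exact Finset.inter_subset_left
  have hsub3 : S3 ⊆ C := by rw [hS3]; exact Finset.inter_subset_left
  have hxex : ∀ S : Finset V, S ⊆ C → S.card = k - 1 → ∃ x ∈ C, S = C.erase x := by
    intro S hSC hScard
    have hcard : (C \ S).card = 1 := by
      rw [Finset.card_sdiff_of_subset hSC, hC, hScard]; omega
    obtain ⟨x, hx⟩ := Finset.card_eq_one.mp hcard
    have hxC : x ∈ C := by
      have : x ∈ C \ S := hx ▸ Finset.mem_singleton_self x
      exact (Finset.mem_sdiff.mp this).1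
    refine ⟨x, hxC, ?_⟩
    have : C \ (C \ S) = S := Finset.sdiff_sdiff_eq_self hSC
    rw [Finset.erase_eq, ← hx, this]
  obtain ⟨x1, hx1C, hx1⟩ := hxex S1 hsub1 hS1card
  obtain ⟨x2, hx2C, hx2⟩ := hxex S2 hsub2 hS2card
  obtain ⟨x3, hx3C, hx3⟩ := hxex S3 hsub3 hS3card
  have hx12 : x1 ≠ x2 := fun h => h12 (by rw [hx1, hx2, h])
  have hx13 : x1 ≠ x3 := fun h => h13 (by rw [hx1, hx3, h])
  have hx23 : x2 ≠ x3 := fun h => h23 (by rw [hx2, hx3, h])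
  -- memberships
  have hx2S1 : x2 ∈ S1 := by rw [hx1]; exact Finset.mem_erase.mpr ⟨hx12.symm, hx2C⟩
  have hx3S1 : x3 ∈ S1 := by rw [hx1]; exact Finset.mem_erase.mpr ⟨hx13.symm, hx3C⟩
  have hx1S2 : x1 ∈ S2 := by rw [hx2]; exact Finset.mem_erase.mpr ⟨hx12, hx1C⟩
  have hx3S2 : x3 ∈ S2 := by rw [hx2]; exact Finset.mem_erase.mpr ⟨hx23.symm, hx3C⟩
  have hx1S3 : x1 ∈ S3 := by rw [hx3]; exact Finset.mem_erase.mpr ⟨hx13, hx1C⟩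
  have hx2S3 : x2 ∈ S3 := by rw [hx3]; exact Finset.mem_erase.mpr ⟨hx23, hx2C⟩
  have hx1nS1 : x1 ∉ S1 := by rw [hx1]; exact Finset.notMem_erase _ _
  have hx2nS2 : x2 ∉ S2 := by rw [hx2]; exact Finset.notMem_erase _ _
  have hx3nS3 : x3 ∉ S3 := by rw [hx3]; exact Finset.notMem_erase _ _
  have hac := hG.IsAcyclic
  have hconn := hG.isConnected.preconnected
  -- the three paths
  obtain ⟨w12⟩ := hconn a1 a2
  obtain ⟨w13⟩ := hconn a1 a3
  obtain ⟨w23⟩ := hconn a3 a2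
  set p12 := w12.bypass with hp12def
  set p13 := w13.bypass with hp13def
  set p23 := w23.bypass with hp23def
  have hp12 : p12.IsPath := w12.bypass_isPath
  have hp13 : p13.IsPath := w13.bypass_isPath
  have hp23 : p23.IsPath := w23.bypass_isPath
  -- vertices on p13 contain x2, vertices on p23 contain x1
  have hA : ∀ u ∈ p13.support, x2 ∈ L u := fun u hu =>
    hRIP a1 a3 p13 hp13 x2 (ha1.symm ▸ hx2S1) (ha3.symm ▸ hx2S3) u hu
  have hB : ∀ u ∈ p23.support, x1 ∈ L u := fun u hu =>
    hRIP a3 a2 p23 hp23 x1 (ha3.symm ▸ hx1S3) (ha2.symm ▸ hx1S2) u hu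
  -- support of p12 is contained in p13 ∪ p23
  have h12sup : ∀ u ∈ p12.support, u ∈ p13.support ∨ u ∈ p23.support := by
    intro u hu
    have heq := vine_aux_support_eq hac hp12 (p13.append p23).bypass_isPath
    have hu' : u ∈ (p13.append p23).bypass.support := heq ▸ hu
    have := (p13.append p23).support_bypass_subset hu'
    exact (Walk.mem_support_append_iff _ _).mp this
  -- labels on p12 are S1 or S2
  have hlab : ∀ u ∈ p12.support, L u = S1 ∨ L u = S2 := by
    intro u hu
    have hcommon : ∀ y ∈ C, y ≠ x1 → y ≠ x2 → y ∈ L u := by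
      intro y hyC hy1 hy2
      have hyS1 : y ∈ S1 := by rw [hx1]; exact Finset.mem_erase.mpr ⟨hy1, hyC⟩
      have hyS2 : y ∈ S2 := by rw [hx2]; exact Finset.mem_erase.mpr ⟨hy2, hyC⟩
      exact hRIP a1 a2 p12 hp12 y (ha1.symm ▸ hyS1) (ha2.symm ▸ hyS2) u hu
    have hcards : (C.erase x1).card = (L u).card := by
      rw [Finset.card_erase_of_mem hx1C, hC, hLcard]
    rcases h12sup u hu with hmem | hmem
    · left
      have hx2u : x2 ∈ L u := hA u hmem
      have hsubu : C.erase x1 ⊆ L u := by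
        intro y hy
        obtain ⟨hy1, hyC⟩ := Finset.mem_erase.mp hy
        by_cases hy2 : y = x2
        · exact hy2 ▸ hx2u
        · exact hcommon y hyC hy1 hy2
      rw [hx1]
      exact (Finset.eq_of_subset_of_card_le hsubu (le_of_eq hcards.symm)).symm
    · right
      have hx1u : x1 ∈ L u := hB u hmem
      have hsubu : C.erase x2 ⊆ L u := by
        intro y hy
        obtain ⟨hy2, hyC⟩ := Finset.mem_erase.mp hy
        by_cases hy1 : y = x1
        · exact hy1 ▸ hx1u
        · exact hcommon y hyC hy1 hy2
      have hcards2 : (C.erase x2).card = (L u).card := by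
        rw [Finset.card_erase_of_mem hx2C, hC, hLcard]
      rw [hx2]
      exact (Finset.eq_of_subset_of_card_le hsubu (le_of_eq hcards2.symm)).symm
  -- find the switching edge on p12
  obtain ⟨c, d, hcd, hcmem, hdmem, hPc, hPd⟩ :=
    vine_aux_switch (fun u => L u = S1) p12 ha1 (fun h => h12 (ha2.symm.trans h).symm)
  have hLc : L c = S1 := hPc
  have hLd : L d = S2 := (hlab d hdmem).resolve_left hPd
  -- c is on p13, d is on p23
  have hcA : c ∈ p13.support := by
    rcases h12sup c hcmem with h | h
    · exact h
    · exact absurd (hLc ▸ hB c h) hx1nS1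
  have hdB : d ∈ p23.support := by
    rcases h12sup d hdmem with h | h
    · exact absurd (hLd ▸ hA d h) hx2nS2
    · exact h
  -- the path from a3 to d inside p23
  set td := p23.takeUntil d hdB with htddef
  have htd : td.IsPath := hp23.takeUntil hdB
  have hda3 : d ≠ a3 := fun h => h23 (by rw [← hLd, h, ha3])
  -- vertices of td other than d lie on p13
  set pc := p13.dropUntil c hcA with hpcdef
  have hw2 : (Walk.cons hcd.symm pc).bypass.IsPath := Walk.bypass_isPath _
  have htdsup : ∀ u ∈ td.support, u ≠ d → u ∈ p13.support := by
    intro u hu hud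
    have h1 : u ∈ td.reverse.support := by rw [Walk.support_reverse]; simpa using hu
    have heq := vine_aux_support_eq hac htd.reverse hw2
    have h2 : u ∈ (Walk.cons hcd.symm pc).support := Walk.support_bypass_subset _ (heq ▸ h1)
    rw [Walk.support_cons] at h2
    rcases List.mem_cons.mp h2 with h | h
    · exact absurd h hud
    · exact p13.support_dropUntil_subset hcA h
  -- vertices of td other than d have label S3
  have htdlab : ∀ u ∈ td.support, u ≠ d → L u = S3 := by
    intro u hu hud
    have hx2u : x2 ∈ L u := hA u (htdsup u hu hud)
    have hsubu : C.erase x3 ⊆ L u := by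
      intro y hy
      obtain ⟨hy3, hyC⟩ := Finset.mem_erase.mp hy
      by_cases hy2 : y = x2
      · exact hy2 ▸ hx2u
      · have hyS2 : y ∈ S2 := by rw [hx2]; exact Finset.mem_erase.mpr ⟨hy2, hyC⟩
        have hyS3 : y ∈ S3 := by rw [hx3]; exact Finset.mem_erase.mpr ⟨hy3, hyC⟩
        exact hRIP a3 d td htd y (ha3.symm ▸ hyS3) (hLd.symm ▸ hyS2) u hu
    have hcards : (C.erase x3).card = (L u).card := by
      rw [Finset.card_erase_of_mem hx3C, hC, hLcard]
    rw [hx3]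
    exact (Finset.eq_of_subset_of_card_le hsubu (le_of_eq hcards.symm)).symm
  -- the neighbor of d towards a3
  obtain ⟨v, hdv, hvmem, hvd⟩ := vine_aux_snd td.reverse htd.reverse hda3
  have hvtd : v ∈ td.support := by
    rw [Walk.support_reverse] at hvmem; simpa using hvmem
  have hLv : L v = S3 := htdlab v hvtd hvd
  -- final contradiction via the path c — d — v
  have hcv : c ≠ v := fun h => h13 (by rw [← hLc, h, hLv])
  have hcdne : c ≠ d := fun h => h12 (by rw [← hLc, h, hLd])
  have hdvne : d ≠ v := fun h => h23 (by rw [← hLd, h, hLv])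
  have hw3 : (Walk.cons hcd (Walk.cons hdv Walk.nil)).IsPath := by
    simp [Walk.isPath_def, hcv, hcdne, hdvne]
  have hx2c : x2 ∈ L c := hLc.symm ▸ hx2S1
  have hx2v : x2 ∈ L v := hLv.symm ▸ hx2S3
  have : x2 ∈ L d :=
    hRIP c v (Walk.cons hcd (Walk.cons hdv Walk.nil)) hw3 x2 hx2c hx2v d (by simp)
  rw [hLd] at this
  exact hx2nS2 this
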